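/- arXiv:2412.14355 — 4 statements merged into one kernel-verified Lean document; each statement's English description precedes it below -/
import Mathlib

section
/- In the two-state inaction environment, fix an integer K ≥ 1 and suppose the agent acts only every K-th environment step, i.e. a(t) ≠ 2 exactly when K divides t. Then for every T ≥ 1 the total reward over steps 1,…,T−1 equals ⌈(T−1)/K⌉, and the regret relative to the always-acting policy equals (T−1) − ⌈(T−1)/K⌉ ≥ (T−1)·(K−1)/K − 1. In particular, for K ≥ 2 the per-step regret ((T−1) − ⌈(T−1)/K⌉)/(T−1) does not tend to 0 as T → ∞, but converges to (K−1)/K > 0. -/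
private lemma ceilDiv_succ (K n : ℕ) (hK : 1 ≤ K) :
    (n + 1) ⌈/⌉ K = n ⌈/⌉ K + (if K ∣ n then 1 else 0) := by
  rw [Nat.ceilDiv_eq_add_pred_div, Nat.ceilDiv_eq_add_pred_div]
  have h1 : n + 1 + K - 1 = (n + K - 1) + 1 := by omega
  rw [h1, Nat.succ_div]
  have h2 : (K ∣ n + K - 1 + 1) ↔ K ∣ n := by
    have h3 : n + K - 1 + 1 = n + K := by omega
    rw [h3]
    exact Nat.dvd_add_self_right
  simp [h2]

private lemma le_mul_ceilDiv (K n : ℕ) (hK : 1 ≤ K) : n ≤ K * (n ⌈/⌉ K) := by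
  rw [Nat.ceilDiv_eq_add_pred_div]
  have h := Nat.div_add_mod (n + K - 1) K
  have h2 : (n + K - 1) % K < K := Nat.mod_lt _ hK
  omega

private lemma ceilDiv_le_real (K n : ℕ) (hK : 1 ≤ K) :
    ((n ⌈/⌉ K : ℕ) : ℝ) ≤ n / K + 1 := by
  rw [Nat.ceilDiv_eq_add_pred_div]
  have h1 : (((n + K - 1) / K : ℕ) : ℝ) ≤ ((n + K - 1 : ℕ) : ℝ) / K := Nat.cast_div_le
  have h2 : ((n + K - 1 : ℕ) : ℝ) = n + K - 1 := by
    have h3 : n + K - 1 + 1 = n + K := by omega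
    have h4 := congrArg (Nat.cast (R := ℝ)) h3
    push_cast at h4
    linarith
  have hK' : (0:ℝ) < K := by exact_mod_cast hK
  rw [h2] at h1
  calc (((n + K - 1) / K : ℕ) : ℝ) ≤ ((n:ℝ) + K - 1) / K := h1
    _ ≤ ((n:ℝ) + K) / K := by gcongr; linarith
    _ = n / K + 1 := by field_simp

private lemma ceilDiv_ge_real (K n : ℕ) (hK : 1 ≤ K) :
    (n : ℝ) / K ≤ ((n ⌈/⌉ K : ℕ) : ℝ) := by
  have hK' : (0:ℝ) < K := by exact_mod_cast hK
  rw [div_le_iff₀ hK']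
  have h := le_mul_ceilDiv K n hK
  have : (n : ℝ) ≤ (K : ℝ) * ((n ⌈/⌉ K : ℕ) : ℝ) := by exact_mod_cast h
  linarith

/-- **Per-step inaction regret of acting every `K`-th step.**
In the two-state environment (states `Fin 2`, actions `Fin 3` with default
action `2`, dynamics `x (t+1) = 0 ↔ a t ≠ 2`, reward `1` at state `0`),
suppose the agent acts exactly at the multiples of `K` (`K ≥ 1`).  Then for
every `T ≥ 1` the total reward over steps `1,…,T−1` equals `⌈(T−1)/K⌉`, the
regret relative to always acting equals `(T−1) − ⌈(T−1)/K⌉ ≥ (T−1)(K−1)/K − 1`,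
and for `K ≥ 2` the per-step regret converges to `(K−1)/K > 0` as `T → ∞`. -/
theorem two_state_periodic_action_regret
    (K : ℕ) (hK : 1 ≤ K) (x : ℕ → Fin 2) (a : ℕ → Fin 3)
    (hx : ∀ t : ℕ, x (t + 1) = if a t ≠ 2 then 0 else 1)
    (ha : ∀ t : ℕ, a t ≠ 2 ↔ K ∣ t) :
    (∀ T : ℕ, 1 ≤ T →
        (∑ t ∈ Finset.Ico 1 T, (if x t = 0 then (1 : ℕ) else 0)) = (T - 1) ⌈/⌉ K
          ∧ ((T : ℝ) - 1) - (((T - 1) ⌈/⌉ K : ℕ) : ℝ)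
              ≥ ((T : ℝ) - 1) * ((K : ℝ) - 1) / K - 1)
      ∧ (2 ≤ K →
          Filter.Tendsto
            (fun T : ℕ => (((T : ℝ) - 1) - (((T - 1) ⌈/⌉ K : ℕ) : ℝ)) / ((T : ℝ) - 1))
            Filter.atTop (nhds (((K : ℝ) - 1) / K))
          ∧ 0 < ((K : ℝ) - 1) / K) := by
  have hK' : (0:ℝ) < K := by exact_mod_cast hK
  -- the sum formula
  have hsum : ∀ T : ℕ, 1 ≤ T →
      (∑ t ∈ Finset.Ico 1 T, (if x t = 0 then (1 : ℕ) else 0)) = (T - 1) ⌈/⌉ K := by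
    intro T hT
    induction T, hT using Nat.le_induction with
    | base => simp
    | succ n hn ih =>
      rw [Finset.sum_Ico_succ_top hn, ih]
      have hxn : x n = if K ∣ (n - 1) then 0 else 1 := by
        obtain ⟨m, rfl⟩ := Nat.exists_eq_add_of_le hn
        have h1m : 1 + m = m + 1 := by omega
        rw [h1m, Nat.add_sub_cancel]
        by_cases hdm : K ∣ m
        · rw [hx m, if_pos ((ha m).mpr hdm), if_pos hdm]
        · rw [hx m, if_neg (fun h => hdm ((ha m).mp h)), if_neg hdm]
      have h1 : n + 1 - 1 = (n - 1) + 1 := by omega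
      rw [h1, ceilDiv_succ K (n - 1) hK]
      by_cases hd : K ∣ (n - 1) <;> simp [hxn, hd]
  constructor
  · intro T hT
    refine ⟨hsum T hT, ?_⟩
    have h2 : (((T - 1) ⌈/⌉ K : ℕ) : ℝ) ≤ ((T - 1 : ℕ) : ℝ) / K + 1 :=
      ceilDiv_le_real K (T - 1) hK
    have h3 : ((T - 1 : ℕ) : ℝ) = (T : ℝ) - 1 := by
      have := Nat.cast_sub (R := ℝ) hT
      simpa using this
    rw [h3] at h2
    have h4 : ((T : ℝ) - 1) * ((K : ℝ) - 1) / K = ((T:ℝ) - 1) - ((T:ℝ) - 1) / K := by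
      field_simp
    rw [ge_iff_le, h4]
    linarith
  · intro hK2
    have hpos : 0 < ((K : ℝ) - 1) / K := by
      apply div_pos _ hK'
      have : (2:ℝ) ≤ K := by exact_mod_cast hK2
      linarith
    refine ⟨?_, hpos⟩
    -- squeeze
    have hup : ∀ᶠ T : ℕ in Filter.atTop,
        (((T : ℝ) - 1) - (((T - 1) ⌈/⌉ K : ℕ) : ℝ)) / ((T : ℝ) - 1)
          ≤ ((K : ℝ) - 1) / K := by
      filter_upwards [Filter.eventually_ge_atTop 2] with T hT
      have hT1 : (1:ℝ) < T := by exact_mod_cast hT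
      have h3 : ((T - 1 : ℕ) : ℝ) = (T : ℝ) - 1 := by
        have := Nat.cast_sub (R := ℝ) (le_of_lt (by exact_mod_cast hT1 : (1:ℕ) < T))
        simpa using this
      have hge := ceilDiv_ge_real K (T - 1) hK
      rw [h3] at hge
      rw [div_le_div_iff₀ (by linarith) hK']
      have h6 := mul_le_mul_of_nonneg_right hge (le_of_lt hK')
      have h7 : ((T:ℝ) - 1) / K * K = (T:ℝ) - 1 := by field_simp
      nlinarith
    have hlo : ∀ᶠ T : ℕ in Filter.atTop,
        ((K : ℝ) - 1) / K - 1 / ((T : ℝ) - 1)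
          ≤ (((T : ℝ) - 1) - (((T - 1) ⌈/⌉ K : ℕ) : ℝ)) / ((T : ℝ) - 1) := by
      filter_upwards [Filter.eventually_ge_atTop 2] with T hT
      have hT1 : (1:ℝ) < T := by exact_mod_cast hT
      have h3 : ((T - 1 : ℕ) : ℝ) = (T : ℝ) - 1 := by
        have := Nat.cast_sub (R := ℝ) (le_of_lt (by exact_mod_cast hT1 : (1:ℕ) < T))
        simpa using this
      have hle := ceilDiv_le_real K (T - 1) hK
      rw [h3] at hle
      have hTpos : (0:ℝ) < (T:ℝ) - 1 := by linarith
      rw [le_div_iff₀ hTpos, sub_mul]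
      have h6 : (1 / ((T:ℝ) - 1)) * ((T:ℝ) - 1) = 1 := by field_simp
      have h7 : (((K:ℝ) - 1) / K) * ((T:ℝ) - 1) = ((T:ℝ) - 1) - ((T:ℝ) - 1) / K := by
        field_simp
      rw [h6, h7]
      linarith
    have hlim : Filter.Tendsto
        (fun T : ℕ => ((K : ℝ) - 1) / K - 1 / ((T : ℝ) - 1))
        Filter.atTop (nhds (((K : ℝ) - 1) / K)) := by
      have h0 : Filter.Tendsto (fun T : ℕ => 1 / ((T : ℝ) - 1)) Filter.atTop (nhds 0) := by
        apply Filter.Tendsto.div_atTop tendsto_const_nhds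
        exact Filter.tendsto_atTop_add_const_right _ _ tendsto_natCast_atTop_atTop
      simpa using tendsto_const_nhds.sub h0
    exact tendsto_of_tendsto_of_tendsto_of_le_of_le' hlim tendsto_const_nhds hlo hup
end

section
/- For the lazy cycle walk on ZMod n with stay probability p, if n > k then the probability of being at the starting state after k steps equals the probability of never moving: μ_k(i)(i) = p^k for every i ∈ ZMod n. -/
open scoped ENNReal

/-- One step of the lazy cycle walk on `ZMod n` with stay probability `p`:
stay at `i` with probability `p`, move to `i + 1` with probability `1 − p`. -/
noncomputable def lazyStep (n : ℕ) (p : ℝ) (hp : 0 ≤ p) (hp1 : p ≤ 1) (i : ZMod n) :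
    PMF (ZMod n) :=
  (PMF.bernoulli (Real.toNNReal (1 - p)) (Real.toNNReal_le_one.mpr (by linarith))).map
    (fun b => if b then i + 1 else i)

/-- The distribution of the lazy cycle walk after `k` steps started at `i`
(the `k`-fold monadic iterate of the one-step PMF). -/
noncomputable def lazyIter (n : ℕ) (p : ℝ) (hp : 0 ≤ p) (hp1 : p ≤ 1) :
    ℕ → ZMod n → PMF (ZMod n)
  | 0, i => PMF.pure i
  | k + 1, i => (lazyIter n p hp hp1 k i).bind (lazyStep n p hp hp1)

/-! The walk only ever moves forward by one, so after `k` steps from `i` it sits at some `i + m`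
with `m ≤ k`. Arriving at `i` at step `k + 1` from `i - 1 = i + (n - 1)` would need `n - 1 ≤ k`;
so when `k + 1 < n` the walk is at `i` at time `k + 1` only if it was there at time `k` and stayed,
and induction gives `p ^ k`. -/

section

variable {n : ℕ} {p : ℝ} (hp : 0 ≤ p) (hp1 : p ≤ 1)

lemma lazyStep_support_subset (a : ZMod n) :
    (lazyStep n p hp hp1 a).support ⊆ {a, a + 1} := by
  rw [lazyStep, PMF.support_map]
  rintro _ ⟨b, -, rfl⟩
  cases b <;> simp

lemma lazyStep_apply_self [Nontrivial (ZMod n)] (a : ZMod n) :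
    lazyStep n p hp hp1 a a = ENNReal.ofReal p := by
  have hstay : 1 - ((1 - p).toNNReal : ℝ≥0∞) = ENNReal.ofReal p := by
    change 1 - ENNReal.ofReal (1 - p) = _
    rw [ENNReal.ofReal_sub _ hp, ENNReal.ofReal_one,
      ENNReal.sub_sub_cancel ENNReal.one_ne_top (ENNReal.ofReal_le_one.mpr hp1)]
  simp [lazyStep, PMF.map_apply, PMF.bernoulli_apply, hstay]

lemma lazyIter_support_subset (k : ℕ) (i : ZMod n) :
    (lazyIter n p hp hp1 k i).support ⊆ (fun m : ℕ => i + m) '' Set.Iic k := by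
  induction k with
  | zero => simp [lazyIter]
  | succ k ih =>
    simp only [lazyIter, PMF.support_bind, Set.iUnion_subset_iff]
    intro a ha
    obtain ⟨m, hm, rfl⟩ := ih ha
    refine (lazyStep_support_subset hp hp1 _).trans ?_
    rintro _ (rfl | rfl)
    · exact ⟨m, Nat.le_succ_of_le hm, rfl⟩
    · exact ⟨m + 1, Nat.succ_le_succ hm, by push_cast; ring⟩

end

theorem lazyIter_apply_self_general (n : ℕ) (p : ℝ) (hp : 0 ≤ p) (hp1 : p ≤ 1)
    (k : ℕ) (hnk : k < n) (i : ZMod n) :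
    lazyIter n p hp hp1 k i i = ENNReal.ofReal p ^ k := by
  induction k with
  | zero => simp [lazyIter]
  | succ k ih =>
    have : Fact (1 < n) := ⟨by omega⟩
    rw [lazyIter, PMF.bind_apply, tsum_eq_single i, ih (by omega), lazyStep_apply_self, pow_succ]
    intro a hai
    by_contra hmass
    obtain ⟨hreach, hstep⟩ := mul_ne_zero_iff.mp hmass
    obtain ⟨m, hm, rfl⟩ := lazyIter_support_subset hp hp1 k i hreach
    obtain hi | hi : i = i + m ∨ i = i + m + 1 := lazyStep_support_subset hp hp1 _ hstep
    · exact hai hi.symm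
    · have hwrap : ((m + 1 : ℕ) : ZMod n) = 0 := by
        push_cast
        linear_combination -hi
      rw [ZMod.natCast_eq_zero_iff] at hwrap
      exact Nat.not_dvd_of_pos_of_lt m.succ_pos (by grind) hwrap

/-- **Return probability before wrap-around.**
If `n > k`, the probability that the lazy cycle walk is at its starting state
after `k` steps equals the probability of never moving: `μ_k(i)(i) = p^k`. -/
theorem lazyIter_apply_self (n : ℕ) [NeZero n] (p : ℝ) (hp : 0 ≤ p) (hp1 : p ≤ 1)
    (k : ℕ) (hnk : k < n) (i : ZMod n) :
    lazyIter n p hp hp1 k i i = ENNReal.ofReal p ^ k :=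
  lazyIter_apply_self_general n p hp hp1 k hnk i
end

section
/- Consider the lazy cycle walk on ZMod n with stay probability p, and suppose n > k and p ≥ k/(k+1). Then for every state i ∈ ZMod n, max_{j ∈ ZMod n} μ_k(i)(j) = p^k, and consequently for every probability mass function g on ZMod n (a randomized k-step-delayed action choice), ∑_{j ∈ ZMod n} g(j)·μ_k(i)(j) ≤ p^k. Hence in the environment where the agent receives reward 1 if its chosen action index equals the current state and 0 otherwise (optimal per-step reward 1), every policy whose actions are based on the state from k steps earlier suffers expected per-step regret at least 1 − p^k. -/
/-! Since `k < n`, the walk cannot wrap around the cycle in `k` steps, so its `k`-step law is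
binomial: `μ_k(i)(i + t) = C(k,t) p^(k-t) (1-p)^t` for `t < n`. The hypothesis `p ≥ k/(k+1)`
says `k (1-p) ≤ p`; together with `C(k,t) ≤ k^t` it bounds every atom by `p^k`, the atom at
`t = 0`. A randomized guess only averages atoms, so it is correct with probability at most
`p^k`. -/

open scoped ENNReal

lemma Nat.choose_succ_succ_mul_pow {R : Type*} [CommSemiring R] (a b : R) (k t : ℕ) :
    ((k + 1).choose (t + 1) : R) * a ^ (k - t) * b ^ (t + 1)
      = k.choose (t + 1) * a ^ (k - (t + 1)) * b ^ (t + 1) * a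
        + k.choose t * a ^ (k - t) * b ^ t * b := by
  rw [Nat.choose_succ_succ', Nat.cast_add]
  rcases lt_or_ge t k with h | h
  · rw [show k - t = k - (t + 1) + 1 by omega, pow_succ]
    ring
  · rw [Nat.choose_eq_zero_of_lt (by omega : k < t + 1)]
    ring

lemma Nat.choose_mul_pow_le_pow {R : Type*} [CommSemiring R] [PartialOrder R] [IsOrderedRing R]
    {a b : R} {k : ℕ} (hb : 0 ≤ b) (hab : k * b ≤ a) (t : ℕ) :
    k.choose t * a ^ (k - t) * b ^ t ≤ a ^ k := by
  have ha : 0 ≤ a := (by positivity : (0 : R) ≤ k * b).trans hab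
  rcases le_or_gt t k with h | h
  · calc (k.choose t : R) * a ^ (k - t) * b ^ t ≤ (k : R) ^ t * a ^ (k - t) * b ^ t := by
          gcongr
          simpa using Nat.mono_cast (α := R) (Nat.choose_le_pow k t)
      _ = (k * b) ^ t * a ^ (k - t) := by ring
      _ ≤ a ^ t * a ^ (k - t) := by gcongr
      _ = a ^ k := by rw [← pow_add, Nat.add_sub_cancel' h]
  · simp only [Nat.choose_eq_zero_of_lt h, Nat.cast_zero, zero_mul]
    positivity

lemma ZMod.natCast_eq_zero_iff_of_lt {n t : ℕ} (ht : t < n) : (t : ZMod n) = 0 ↔ t = 0 := by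
  rw [ZMod.natCast_eq_zero_iff]
  exact ⟨fun h => Nat.eq_zero_of_dvd_of_lt h ht, fun h => h ▸ dvd_zero n⟩

lemma PMF.sum_mul_le {α : Type*} [Fintype α] (g : PMF α) {f : α → ℝ≥0∞} {c : ℝ≥0∞}
    (hf : ∀ a, f a ≤ c) : ∑ a, g a * f a ≤ c :=
  calc ∑ a, g a * f a ≤ ∑ a, g a * c := by gcongr with a; exact hf a
    _ = c := by
      rw [← Finset.sum_mul, ← tsum_fintype (L := .unconditional _), g.tsum_coe, one_mul]

section LazyWalk

variable {n : ℕ} {p : ℝ} (hp : 0 ≤ p) (hp1 : p ≤ 1)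

lemma lazyStep_apply (i j : ZMod n) :
    lazyStep n p hp hp1 i j
      = (if j = i then ENNReal.ofReal p else 0)
        + (if j = i + 1 then ENNReal.ofReal (1 - p) else 0) := by
  have hq : (1 : ℝ≥0∞) - ENNReal.ofReal (1 - p) = ENNReal.ofReal p := by
    rw [← ENNReal.ofReal_one, ← ENNReal.ofReal_sub _ (by linarith)]
    simp
  rw [lazyStep, PMF.map_apply, tsum_bool]
  simp [PMF.bernoulli_apply, ← ENNReal.ofReal.eq_1, hq]

lemma lazyIter_succ_apply (k : ℕ) (i j : ZMod n) :
    lazyIter n p hp hp1 (k + 1) i j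
      = lazyIter n p hp hp1 k i j * ENNReal.ofReal p
        + lazyIter n p hp hp1 k i (j - 1) * ENNReal.ofReal (1 - p) := by
  simp only [lazyIter, PMF.bind_apply, lazyStep_apply, mul_add, mul_ite, mul_zero,
    ← eq_sub_iff_add_eq, eq_comm (a := j)]
  rw [ENNReal.tsum_add, tsum_ite_eq, tsum_ite_eq]

lemma lazyIter_apply_add_natCast {k t : ℕ} (hk : k < n) (ht : t < n) (i : ZMod n) :
    lazyIter n p hp hp1 k i (i + t)
      = k.choose t * ENNReal.ofReal p ^ (k - t) * ENNReal.ofReal (1 - p) ^ t := by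
  induction k generalizing t with
  | zero =>
    simp only [lazyIter, PMF.pure_apply, add_eq_left, ZMod.natCast_eq_zero_iff_of_lt ht]
    rcases t.eq_zero_or_pos with rfl | h
    · simp
    · simp [h.ne', Nat.choose_eq_zero_of_lt h]
  | succ k ih =>
    rw [lazyIter_succ_apply]
    cases t with
    | zero =>
      -- the predecessor of `i` is `i + (n - 1)`, unreachable in `k < n - 1` steps
      have hpred : i + ((0 : ℕ) : ZMod n) - 1 = i + ((n - 1 : ℕ) : ZMod n) := by
        rw [Nat.cast_sub (by omega), ZMod.natCast_self]
        ring
      rw [hpred, ih (by omega) ht, ih (by omega) (by omega : n - 1 < n),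
        Nat.choose_eq_zero_of_lt (by omega : k < n - 1)]
      simp [pow_succ]
    | succ t =>
      have hpred : i + ((t + 1 : ℕ) : ZMod n) - 1 = i + (t : ℕ) := by
        push_cast
        ring
      rw [hpred, ih (by omega) ht, ih (by omega) (by omega : t < n), Nat.add_sub_add_right]
      exact (Nat.choose_succ_succ_mul_pow _ _ k t).symm

end LazyWalk

/-- **Delay-regret lower bound for the lazy cycle walk.**
If `n > k` and `p ≥ k/(k+1)`, then for every start state `i` the largest atom
of the `k`-step distribution is `p^k` (attained at the start state), so every
randomized guess `g` of the current state based on the state from `k` steps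
earlier is correct with probability at most `p^k`; hence in the environment
rewarding `1` exactly when the chosen action index matches the current state,
every `k`-step-delayed policy suffers expected per-step regret `≥ 1 − p^k`. -/
theorem lazy_cycle_delay_regret (n : ℕ) [NeZero n] (p : ℝ) (hp : 0 ≤ p) (hp1 : p ≤ 1)
    (k : ℕ) (hnk : k < n) (hpk : (k : ℝ) / ((k : ℝ) + 1) ≤ p) (i : ZMod n) :
    (⨆ j : ZMod n, lazyIter n p hp hp1 k i j) = ENNReal.ofReal p ^ k
      ∧ (∀ g : PMF (ZMod n),
          (∑ j : ZMod n, g j * lazyIter n p hp hp1 k i j) ≤ ENNReal.ofReal p ^ k)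
      ∧ (∀ g : PMF (ZMod n),
          (1 : ℝ≥0∞) - (∑ j : ZMod n, g j * lazyIter n p hp hp1 k i j)
            ≥ 1 - ENNReal.ofReal p ^ k) := by
  have hmove : (k : ℝ≥0∞) * ENNReal.ofReal (1 - p) ≤ ENNReal.ofReal p := by
    rw [← ENNReal.ofReal_natCast, ← ENNReal.ofReal_mul (by positivity)]
    rw [div_le_iff₀ (by positivity)] at hpk
    exact ENNReal.ofReal_le_ofReal (by linarith)
  have hatom (j : ZMod n) : lazyIter n p hp hp1 k i j ≤ ENNReal.ofReal p ^ k := by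
    rw [← add_sub_cancel i j, ← ZMod.natCast_zmod_val (j - i),
      lazyIter_apply_add_natCast hp hp1 hnk (ZMod.val_lt _)]
    exact Nat.choose_mul_pow_le_pow zero_le hmove _
  have hstay : lazyIter n p hp hp1 k i i = ENNReal.ofReal p ^ k := by
    simpa using lazyIter_apply_add_natCast hp hp1 hnk (Nat.pos_of_neZero n) i
  have hguess (g : PMF (ZMod n)) :
      ∑ j, g j * lazyIter n p hp hp1 k i j ≤ ENNReal.ofReal p ^ k :=
    g.sum_mul_le hatom
  exact ⟨le_antisymm (iSup_le hatom) (hstay ▸ le_iSup _ i), hguess,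
    fun g => tsub_le_tsub_left (hguess g) 1⟩
end

section
/- Let τ > 0 and τ_M > 0 be reals and N ≥ 1 an integer with N·τ_M ≥ τ (equivalently, N ≥ τ/τ_M, which holds whenever N ≥ ⌈τ/τ_M⌉). Then the staggered inference schedule with period τ and N processes leaves no environment step without an action after startup: for every real t ≥ τ there exists l ∈ ℕ with t ≤ τ + l·(τ/N) < t + τ_M. Consequently every interval [t, t + τ_M) with t ≥ τ contains an action time, so the fraction of environment steps of length τ_M in [0, T] containing no action tends to 0 as T → ∞. -/
/-! Consecutive action times are `τ / N ≤ τM` apart, so from time `τ` on every window of length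
`τM` contains one. Hence only the environment steps starting before `τ` can be without action;
there are boundedly many of them, so their fraction among the first `K` steps is `O(1 / K)`. -/

open scoped Classical

open Filter Topology

theorem exists_nat_add_mul_mem_Ico {a d w t : ℝ} (hd : 0 < d) (hdw : d ≤ w) (hat : a ≤ t) :
    ∃ l : ℕ, t ≤ a + l * d ∧ a + l * d < t + w := by
  have hx : 0 ≤ (t - a) / d := div_nonneg (sub_nonneg.mpr hat) hd.le
  refine ⟨⌈(t - a) / d⌉₊, ?_, ?_⟩
  · have := (div_le_iff₀ hd).mp (Nat.le_ceil ((t - a) / d))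
    linarith
  · have := (lt_div_iff₀ hd).mp (sub_lt_iff_lt_add.mpr (Nat.ceil_lt_add_one hx))
    linarith

theorem tendsto_card_filter_not_range_div_of_eventually {p : ℕ → Prop} [DecidablePred p]
    (hp : ∀ᶠ k in atTop, p k) :
    Tendsto (fun K : ℕ => (((Finset.range K).filter (fun k => ¬ p k)).card : ℝ) / K)
      atTop (𝓝 0) := by
  obtain ⟨M, hM⟩ := eventually_atTop.mp hp
  have hcard (K : ℕ) : ((Finset.range K).filter (fun k => ¬ p k)).card ≤ M := by
    calc _ ≤ (Finset.range M).card := Finset.card_le_card fun k hk => by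
            simp only [Finset.mem_filter, Finset.mem_range] at hk ⊢
            by_contra! hkM
            exact hk.2 (hM k hkM)
      _ = M := Finset.card_range M
  refine squeeze_zero (fun K => by positivity) (fun K => ?_)
    (tendsto_const_div_atTop_nhds_zero_nat (M : ℝ))
  gcongr
  exact_mod_cast hcard K

/-- **Staggered inference eliminates inaction.**
Let `τ, τM > 0` and `N ≥ 1` with `N·τM ≥ τ` (which holds whenever
`N ≥ ⌈τ/τM⌉`).  The staggered schedule with action times `τ + l·τ/N` (`l ∈ ℕ`)
leaves no environment step without an action after startup: every interval
`[t, t + τM)` with `t ≥ τ` contains an action time.  Consequently the fraction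
of environment steps of length `τM` among the first `K` steps that contain no
action time tends to `0` as `K → ∞`. -/
theorem staggered_inference_no_inaction
    (τ τM : ℝ) (hτ : 0 < τ) (hτM : 0 < τM) (N : ℕ) (hN : 1 ≤ N)
    (hcover : τ ≤ (N : ℝ) * τM) :
    (∀ t : ℝ, τ ≤ t →
        ∃ l : ℕ, t ≤ τ + (l : ℝ) * (τ / N) ∧ τ + (l : ℝ) * (τ / N) < t + τM)
      ∧ Filter.Tendsto
          (fun K : ℕ =>
            (((Finset.range K).filter (fun k : ℕ =>
                ¬ ∃ l : ℕ, (k : ℝ) * τM ≤ τ + (l : ℝ) * (τ / N)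
                    ∧ τ + (l : ℝ) * (τ / N) < ((k : ℝ) + 1) * τM)).card : ℝ) / (K : ℝ))
          Filter.atTop (nhds 0) := by
  have hN0 : (0 : ℝ) < N := by exact_mod_cast hN
  have hstep : τ / N ≤ τM := (div_le_iff₀ hN0).mpr (by linarith)
  have hcovers (t : ℝ) (ht : τ ≤ t) :
      ∃ l : ℕ, t ≤ τ + (l : ℝ) * (τ / N) ∧ τ + (l : ℝ) * (τ / N) < t + τM :=
    exists_nat_add_mul_mem_Ico (div_pos hτ hN0) hstep ht
  refine ⟨hcovers, tendsto_card_filter_not_range_div_of_eventually ?_⟩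
  have hlate : ∀ᶠ k : ℕ in atTop, τ ≤ (k : ℝ) * τM :=
    (tendsto_natCast_atTop_atTop.atTop_mul_const hτM).eventually_ge_atTop τ
  filter_upwards [hlate] with k hk
  obtain ⟨l, hl₁, hl₂⟩ := hcovers _ hk
  exact ⟨l, hl₁, by linarith⟩
end
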